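/- arXiv:math/0305171 — 6 statements merged into one kernel-verified Lean document; each statement's English description precedes it below -/
import Mathlib

section
/- Let R be a ring. For each pair of indices 0 ≤ i < j ≤ 3 let f_{ij} be a ring automorphism of R, and for each triple 0 ≤ i < j < k ≤ 3 let a_{ijk} be a unit of R, such that f_{ij} ∘ f_{jk} = Ad(a_{ijk}) ∘ f_{ik} for all 0 ≤ i < j < k ≤ 3. Then the unit (f_{01}(a_{123}) · a_{013})⁻¹ · (a_{012} · a_{023}) lies in the center of R; equivalently, there exists a central unit c of R such that a_{012} · a_{023} = f_{01}(a_{123}) · a_{013} · c. -/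
/-- For ring automorphisms `f i j` (0 ≤ i < j ≤ 3) and units `a i j k`
(0 ≤ i < j < k ≤ 3) of a ring `R` satisfying `f_{ij} ∘ f_{jk} = Ad(a_{ijk}) ∘ f_{ik}`,
the unit `(f₀₁(a₁₂₃)·a₀₁₃)⁻¹·(a₀₁₂·a₀₂₃)` is central; equivalently there is a central
unit `c` with `a₀₁₂·a₀₂₃ = f₀₁(a₁₂₃)·a₀₁₃·c`. -/
theorem stmt_0 (R : Type*) [Ring R]
    (f : Fin 4 → Fin 4 → (R ≃+* R)) (a : Fin 4 → Fin 4 → Fin 4 → Rˣ)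
    (hfa : ∀ i j k : Fin 4, i < j → j < k →
      ∀ b : R, f i j (f j k b) = (a i j k : R) * f i k b * (↑(a i j k)⁻¹ : R)) :
    ((((Units.map ((f 0 1).toRingHom.toMonoidHom) (a 1 2 3)) * a 0 1 3)⁻¹
        * (a 0 1 2 * a 0 2 3) : Rˣ) : R) ∈ Set.center R ∧
    ∃ c : Rˣ, (↑c : R) ∈ Set.center R ∧
      (↑(a 0 1 2) * ↑(a 0 2 3) : R) = f 0 1 (↑(a 1 2 3)) * ↑(a 0 1 3) * ↑c := by
  set v : Rˣ := (Units.map ((f 0 1).toRingHom.toMonoidHom) (a 1 2 3)) * a 0 1 3 with hv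
  set w : Rˣ := a 0 1 2 * a 0 2 3 with hw
  -- key conjugation identity
  have key : ∀ b : R, (w : R) * f 0 3 b * (↑w⁻¹ : R) = (v : R) * f 0 3 b * (↑v⁻¹ : R) := by
    intro b
    have h1 : f 0 1 (f 1 2 (f 2 3 b)) =
        (a 0 1 2 : R) * ((a 0 2 3 : R) * f 0 3 b * (↑(a 0 2 3)⁻¹ : R)) * (↑(a 0 1 2)⁻¹ : R) := by
      rw [hfa 0 1 2 (by decide) (by decide), hfa 0 2 3 (by decide) (by decide)]
    have h2 : f 0 1 (f 1 2 (f 2 3 b)) =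
        f 0 1 (a 1 2 3 : R) * ((a 0 1 3 : R) * f 0 3 b * (↑(a 0 1 3)⁻¹ : R))
          * f 0 1 (↑(a 1 2 3)⁻¹ : R) := by
      rw [hfa 1 2 3 (by decide) (by decide)]
      simp only [map_mul]
      rw [hfa 0 1 3 (by decide) (by decide)]
    have key' := h1.symm.trans h2
    calc (w : R) * f 0 3 b * (↑w⁻¹ : R)
        = (a 0 1 2 : R) * ((a 0 2 3 : R) * f 0 3 b * (↑(a 0 2 3)⁻¹ : R)) * (↑(a 0 1 2)⁻¹ : R) := by
          simp [hw, mul_assoc]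
      _ = f 0 1 (a 1 2 3 : R) * ((a 0 1 3 : R) * f 0 3 b * (↑(a 0 1 3)⁻¹ : R))
            * f 0 1 (↑(a 1 2 3)⁻¹ : R) := key'
      _ = (v : R) * f 0 3 b * (↑v⁻¹ : R) := by
          simp [hv, mul_assoc]
  have hcomm : ∀ r : R, ((↑(v⁻¹ * w) : R)) * r = r * (↑(v⁻¹ * w) : R) := by
    intro r
    have hk := key ((f 0 3).symm r)
    rw [RingEquiv.apply_symm_apply] at hk
    have h3 : (↑v⁻¹ : R) * ((w : R) * r * (↑w⁻¹ : R)) * (w : R)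
        = (↑v⁻¹ : R) * ((v : R) * r * (↑v⁻¹ : R)) * (w : R) := by rw [hk]
    calc (↑(v⁻¹ * w) : R) * r = (↑v⁻¹ : R) * ((w : R) * r * (↑w⁻¹ : R)) * (w : R) := by
          simp [mul_assoc]
      _ = (↑v⁻¹ : R) * ((v : R) * r * (↑v⁻¹ : R)) * (w : R) := h3
      _ = r * (↑(v⁻¹ * w) : R) := by
          simp [← mul_assoc]
  have hcen : ((↑(v⁻¹ * w) : R)) ∈ Set.center R :=
    Semigroup.mem_center_iff.mpr fun r => (hcomm r).symm
  refine ⟨hcen, v⁻¹ * w, hcen, ?_⟩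
  have h4 : (v : R) * (↑(v⁻¹ * w) : R) = (w : R) := by simp [← mul_assoc]
  simpa [hv, hw, mul_assoc] using h4.symm
end

section
/- Let R and S be rings. For each pair 0 ≤ i < j ≤ 2 let f_{ij} be a ring automorphism of R and g_{ij} a ring automorphism of S; for i = 0, 1, 2 let u_i : R → S be a ring isomorphism; let a be a unit of R, b a unit of S, and l_{ij} units of S for 0 ≤ i < j ≤ 2. Assume: f_{01} ∘ f_{12} = Ad(a) ∘ f_{02}; g_{01} ∘ g_{12} = Ad(b) ∘ g_{02}; and g_{ij} ∘ u_j = Ad(l_{ij}) ∘ u_i ∘ f_{ij} for all 0 ≤ i < j ≤ 2. Then the unit (g_{01}(l_{12}) · l_{01} · u_0(a))⁻¹ · (b · l_{02}) lies in the center of S; equivalently, there exists a central unit d of S with b · l_{02} = g_{01}(l_{12}) · l_{01} · u_0(a) · d. -/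
/-- the defect `d` of an isomorphism of liens is central
(computation following Definition 3.7 of the paper). -/
theorem stmt_2 (R S : Type*) [Ring R] [Ring S]
    (f : Fin 3 → Fin 3 → (R ≃+* R)) (g : Fin 3 → Fin 3 → (S ≃+* S))
    (u : Fin 3 → (R ≃+* S)) (a : Rˣ) (b : Sˣ) (l : Fin 3 → Fin 3 → Sˣ)
    (hf : ∀ x : R, f 0 1 (f 1 2 x) = (a : R) * f 0 2 x * (↑a⁻¹ : R))
    (hg : ∀ y : S, g 0 1 (g 1 2 y) = (b : S) * g 0 2 y * (↑b⁻¹ : S))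
    (hu : ∀ i j : Fin 3, i < j →
      ∀ x : R, g i j (u j x) = (l i j : S) * u i (f i j x) * (↑(l i j)⁻¹ : S)) :
    ((((Units.map ((g 0 1).toRingHom.toMonoidHom) (l 1 2)) * l 0 1
        * (Units.map ((u 0).toRingHom.toMonoidHom) a))⁻¹ * (b * l 0 2) : Sˣ) : S)
      ∈ Set.center S ∧
    ∃ d : Sˣ, (↑d : S) ∈ Set.center S ∧
      (↑b * ↑(l 0 2) : S) = g 0 1 (↑(l 1 2)) * ↑(l 0 1) * u 0 (↑a) * ↑d := by
  set P : Sˣ := Units.map ((g 0 1).toRingHom.toMonoidHom) (l 1 2) * l 0 1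
        * Units.map ((u 0).toRingHom.toMonoidHom) a with hP
  set Q : Sˣ := b * l 0 2 with hQ
  have hPv : (P : S) = g 0 1 ↑(l 1 2) * ↑(l 0 1) * u 0 ↑a := by
    simp [hP]
  have hPinv : ((P⁻¹ : Sˣ) : S) = u 0 ↑a⁻¹ * ↑(l 0 1)⁻¹ * g 0 1 ↑(l 1 2)⁻¹ := by
    simp [hP, mul_inv_rev, mul_assoc]
  have hQv : (Q : S) = ↑b * ↑(l 0 2) := rfl
  have hQinv : ((Q⁻¹ : Sˣ) : S) = ↑(l 0 2)⁻¹ * ↑b⁻¹ := by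
    simp [hQ, mul_inv_rev]
  have key : ∀ s : S, (P : S) * s * ↑P⁻¹ = (Q : S) * s * ↑Q⁻¹ := by
    intro s
    set x := (f 0 2).symm ((u 0).symm s) with hx
    have hs : u 0 (f 0 2 x) = s := by simp [hx]
    have h1 := hu 1 2 (by decide) x
    have h2 := hu 0 1 (by decide) (f 1 2 x)
    have h3 := hu 0 2 (by decide) x
    have h4 := hg (u 2 x)
    have h5 := hf x
    have E : g 0 1 (g 1 2 (u 2 x))
        = g 0 1 ↑(l 1 2) * ↑(l 0 1) * u 0 ↑a * u 0 (f 0 2 x) * u 0 ↑a⁻¹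
          * ↑(l 0 1)⁻¹ * g 0 1 ↑(l 1 2)⁻¹ := by
      rw [h1, map_mul, map_mul, h2, h5, map_mul, map_mul]
      simp only [mul_assoc]
    have E' : g 0 1 (g 1 2 (u 2 x))
        = ↑b * ↑(l 0 2) * u 0 (f 0 2 x) * ↑(l 0 2)⁻¹ * ↑b⁻¹ := by
      rw [h4, h3]; simp only [mul_assoc]
    rw [hPv, hPinv, hQv, hQinv, ← hs]
    calc g 0 1 ↑(l 1 2) * ↑(l 0 1) * u 0 ↑a * u 0 (f 0 2 x)
          * (u 0 ↑a⁻¹ * ↑(l 0 1)⁻¹ * g 0 1 ↑(l 1 2)⁻¹)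
        = g 0 1 ↑(l 1 2) * ↑(l 0 1) * u 0 ↑a * u 0 (f 0 2 x) * u 0 ↑a⁻¹
          * ↑(l 0 1)⁻¹ * g 0 1 ↑(l 1 2)⁻¹ := by simp only [mul_assoc]
      _ = g 0 1 (g 1 2 (u 2 x)) := E.symm
      _ = ↑b * ↑(l 0 2) * u 0 (f 0 2 x) * ↑(l 0 2)⁻¹ * ↑b⁻¹ := E'
      _ = ↑b * ↑(l 0 2) * u 0 (f 0 2 x) * (↑(l 0 2)⁻¹ * ↑b⁻¹) := by
          simp only [mul_assoc]
  have hcen : ((P⁻¹ * Q : Sˣ) : S) ∈ Set.center S := by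
    rw [Semigroup.mem_center_iff]
    intro s
    have h := congrArg (fun t => ((P⁻¹ : Sˣ) : S) * t * ((Q : Sˣ) : S)) (key s)
    simp only [Units.val_mul] at *
    calc s * ((P⁻¹ : Sˣ) * (Q : Sˣ) : S)
        = ((P⁻¹ : Sˣ) : S) * ((P : S) * s * ↑P⁻¹) * Q := by
          simp [mul_assoc, Units.inv_mul_cancel_left]
      _ = ((P⁻¹ : Sˣ) : S) * ((Q : S) * s * ↑Q⁻¹) * Q := by rw [key s]
      _ = ((P⁻¹ : Sˣ) * Q : S) * s := by
          simp [mul_assoc, Units.inv_mul_cancel_left]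
  refine ⟨hcen, P⁻¹ * Q, hcen, ?_⟩
  have hU : P * (P⁻¹ * Q) = Q := mul_inv_cancel_left P Q
  have : (Q : S) = (P : S) * ((P⁻¹ * Q : Sˣ) : S) := by
    conv_lhs => rw [← hU]
    rw [Units.val_mul]
  rw [← hQv, ← hPv, this]
end

section
/- Let K = {f ∈ ℂ((t)) : there exists C > 0 such that |coeff_k(f)| ≤ C^k · k! for all integers k ≥ 1}. Then for every nonzero f ∈ K, the inverse f⁻¹ in the field ℂ((t)) again belongs to K. Hence K is a subfield of ℂ((t)). -/
/-!
Write `f = t ^ d * u` with `u` a power series. A bound `‖coeff_n‖ ≤ D * E ^ n * n !` survives the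
shift by `t ^ d` in either direction, because `(n + e)! ≤ 2 ^ (n + e) * n ! * e !`. For the inverse
`v = u⁻¹` the recursion `u₀ v_n = -∑_{i ≥ 1} u_i v_{n-i}` and `i ! * (n - i)! ≤ n !` propagate such
a bound by strong induction as soon as `E` is large compared with the growth rate `A` of `u`: the
sum over `i` is then dominated by the geometric series in `A / E`.
-/

open Finset PowerSeries Nat

theorem Nat.add_factorial_le_two_pow_mul_factorial_mul_factorial (n e : ℕ) :
    (n + e)! ≤ 2 ^ (n + e) * n ! * e ! := by
  rw [← add_choose_mul_factorial_mul_factorial n e]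
  gcongr
  exact choose_le_two_pow _ _

theorem exists_pow_mul_factorial_le_of_le_add {D E : ℝ} (hD : 1 ≤ D) (hE : 1 ≤ E) (e : ℕ) :
    ∃ C : ℝ, 1 ≤ C ∧ ∀ m n : ℕ, 1 ≤ n → m ≤ n + e → D * E ^ m * m ! ≤ C ^ n * n ! := by
  set K : ℝ := D * E ^ e * 2 ^ e * (e ! : ℝ)
  have hK : 1 ≤ K := by
    have : (1 : ℝ) ≤ e ! := by exact_mod_cast e.factorial_pos
    have := one_le_pow₀ (M₀ := ℝ) hE (n := e)
    have := one_le_pow₀ (M₀ := ℝ) one_le_two (n := e)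
    bound
  refine ⟨K * (2 * E), by nlinarith, fun m n hn hm => ?_⟩
  have hfact : ((n + e)! : ℝ) ≤ 2 ^ (n + e) * n ! * e ! := by
    exact_mod_cast add_factorial_le_two_pow_mul_factorial_mul_factorial n e
  calc D * E ^ m * m ! ≤ D * E ^ (n + e) * (n + e)! := by gcongr
    _ ≤ D * E ^ (n + e) * (2 ^ (n + e) * n ! * e !) := by gcongr
    _ = K * (2 * E) ^ n * n ! := by ring
    _ ≤ K ^ n * (2 * E) ^ n * n ! := by gcongr; exact le_self_pow₀ hK (by omega)
    _ = (K * (2 * E)) ^ n * n ! := by rw [← mul_pow]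

theorem exists_forall_norm_le_of_forall_ge {V : Type*} [SeminormedAddCommGroup V] {a : ℕ → V}
    {E : ℝ} (hE : 1 ≤ E) {N : ℕ} (h : ∀ n ≥ N, ‖a n‖ ≤ E ^ n * n !) :
    ∃ D : ℝ, 1 ≤ D ∧ ∀ n, ‖a n‖ ≤ D * E ^ n * n ! := by
  set S := ∑ i ∈ range N, ‖a i‖
  have hS : 0 ≤ S := sum_nonneg fun i _ => norm_nonneg _
  refine ⟨1 + S, by linarith, fun n => ?_⟩
  have hgrowth : 1 ≤ E ^ n * n ! :=
    one_le_mul_of_one_le_of_one_le (one_le_pow₀ hE) (mod_cast n.factorial_pos)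
  rw [mul_assoc]
  rcases le_or_gt N n with hn | hn
  · exact (h n hn).trans (le_mul_of_one_le_left (by positivity) (by linarith))
  · calc ‖a n‖ ≤ S := single_le_sum (fun i _ => norm_nonneg (a i)) (mem_range.2 hn)
      _ ≤ 1 + S := by linarith
      _ ≤ (1 + S) * (E ^ n * n !) := le_mul_of_one_le_right (by positivity) hgrowth

namespace PowerSeries

variable {R : Type*} [NormedRing R]

def HasFactorialGrowth (p : R⟦X⟧) : Prop :=
  ∃ D E : ℝ, 1 ≤ D ∧ 1 ≤ E ∧ ∀ n, ‖coeff n p‖ ≤ D * E ^ n * n !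

theorem coeff_inv_eq_neg_inv_mul_sum {K : Type*} [Field K] (u : K⟦X⟧) {n : ℕ} (hn : n ≠ 0) :
    coeff n u⁻¹ =
      -(constantCoeff u)⁻¹ * ∑ i ∈ range n, coeff (i + 1) u * coeff (n - 1 - i) u⁻¹ := by
  rw [coeff_inv, if_neg hn, Finset.Nat.sum_antidiagonal_eq_sum_range_succ
    (fun i j => if j < n then coeff i u * coeff j u⁻¹ else 0), sum_range_succ']
  simp only [Nat.sub_zero, lt_irrefl, if_false, add_zero]
  congr 1
  refine sum_congr rfl fun i hi => ?_
  rw [if_pos (by omega), Nat.sub_sub, Nat.add_comm 1 i]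

theorem HasFactorialGrowth.inv {K : Type*} [NormedField K] {u : K⟦X⟧}
    (hu : u.HasFactorialGrowth) : u⁻¹.HasFactorialGrowth := by
  obtain ⟨M, A, hM, hA, hbound⟩ := hu
  set c := ‖(constantCoeff u)⁻¹‖
  set D := max c 1
  set E := 2 * A * (1 + c * M)
  have hcM : 0 ≤ c * M := by positivity
  have hE : 2 * A ≤ E := le_mul_of_one_le_right (by positivity) (by linarith)
  have hEc : 2 * c * M * A ≤ E := by nlinarith
  have hE0 : 0 < E := by linarith
  set r := A / E
  have hr : r ≤ 1 / 2 := by rw [div_le_iff₀ hE0]; linarith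
  refine ⟨D, E, le_max_right _ _, by linarith, fun n => ?_⟩
  induction n using Nat.strong_induction_on with | _ n ih => ?_
  rcases eq_or_ne n 0 with rfl | hn
  · simp [c, D]
  have hterm : ∀ i ∈ range n, ‖coeff (i + 1) u * coeff (n - 1 - i) u⁻¹‖ ≤
      M * D * n ! * E ^ n * r * (1 / 2) ^ i := by
    intro i hi
    have hsplit : i + 1 + (n - 1 - i) = n := by simp only [mem_range] at hi; omega
    have hpow : A ^ (i + 1) * E ^ (n - 1 - i) = r ^ (i + 1) * E ^ n := by
      conv_rhs => rw [← hsplit]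
      rw [_root_.pow_add, div_pow]; field_simp; ring
    have hfact : ((i + 1)! * (n - 1 - i)! : ℝ) ≤ n ! := by
      have hdvd := factorial_mul_factorial_dvd_factorial_add (i + 1) (n - 1 - i)
      rw [hsplit] at hdvd
      exact_mod_cast Nat.le_of_dvd (factorial_pos _) hdvd
    have hr_pow : r ^ (i + 1) ≤ r * (1 / 2) ^ i := by
      rw [_root_.pow_succ']; gcongr
    calc ‖coeff (i + 1) u * coeff (n - 1 - i) u⁻¹‖
        ≤ (M * A ^ (i + 1) * (i + 1)!) * (D * E ^ (n - 1 - i) * (n - 1 - i)!) :=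
          norm_mul_le_of_le (hbound _) (ih _ (by omega))
      _ = M * D * ((i + 1)! * (n - 1 - i)!) * (r ^ (i + 1) * E ^ n) := by rw [← hpow]; ring
      _ ≤ M * D * n ! * (r * (1 / 2) ^ i * E ^ n) := by gcongr
      _ = M * D * n ! * E ^ n * r * (1 / 2) ^ i := by ring
  rw [coeff_inv_eq_neg_inv_mul_sum u hn, norm_mul, norm_neg]
  calc c * ‖∑ i ∈ range n, coeff (i + 1) u * coeff (n - 1 - i) u⁻¹‖
      ≤ c * ∑ i ∈ range n, M * D * n ! * E ^ n * r * (1 / 2) ^ i := by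
        gcongr; exact norm_sum_le_of_le _ hterm
    _ = (c * M * r) * (D * E ^ n * n !) * ∑ i ∈ range n, (1 / 2 : ℝ) ^ i := by
        rw [← mul_sum]; ring
    _ ≤ (c * M * r) * (D * E ^ n * n !) * 2 := by gcongr; exact sum_geometric_two_le n
    _ = (2 * c * M * A / E) * (D * E ^ n * n !) := by ring
    _ ≤ D * E ^ n * n ! := mul_le_of_le_one_left (by positivity) ((div_le_one hE0).2 hEc)

end PowerSeries

namespace LaurentSeries

open HahnSeries

variable {R : Type*} [NormedRing R]

def HasFactorialGrowth (f : R⸨X⸩) : Prop :=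
  ∃ C : ℝ, 0 < C ∧ ∀ k : ℤ, 1 ≤ k → ‖f.coeff k‖ ≤ C ^ k.toNat * (k.toNat).factorial

theorem coeff_single_one_mul_coe (d k : ℤ) (p : R⟦X⟧) :
    ((single d 1 : R⸨X⸩) * p).coeff k = if k - d < 0 then 0 else coeff (k - d).natAbs p := by
  rw [← sub_add_cancel k d, coeff_single_mul_add, one_mul, PowerSeries.coeff_coe,
    add_sub_cancel_right]

theorem hasFactorialGrowth_single_one_mul_coe_iff (d : ℤ) (p : R⟦X⟧) :
    HasFactorialGrowth ((single d 1 : R⸨X⸩) * (p : R⸨X⸩)) ↔ p.HasFactorialGrowth := by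
  constructor
  · rintro ⟨C, hC, hbound⟩
    obtain ⟨C', hC', hshift⟩ :=
      exists_pow_mul_factorial_le_of_le_add le_rfl (le_max_right C 1) d.toNat
    suffices ∀ n ≥ (1 - d).toNat + 1, ‖coeff n p‖ ≤ C' ^ n * (n ! : ℝ) by
      obtain ⟨D, hD, hD_bound⟩ := exists_forall_norm_le_of_forall_ge hC' this
      exact ⟨D, C', hD, hC', hD_bound⟩
    intro n hn
    have hcoeff := coeff_single_one_mul_coe d (n + d) p
    simp only [add_sub_cancel_right, Int.natAbs_natCast, if_neg (Int.natCast_nonneg n).not_gt]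
      at hcoeff
    calc ‖coeff n p‖ = ‖((single d 1 : R⸨X⸩) * p).coeff (n + d)‖ := by rw [hcoeff]
      _ ≤ C ^ (n + d).toNat * (n + d).toNat ! := hbound _ (by omega)
      _ ≤ 1 * max C 1 ^ (n + d).toNat * (n + d).toNat ! := by
        rw [one_mul]; gcongr; exact le_max_left C 1
      _ ≤ C' ^ n * n ! := hshift _ _ (by omega) (by omega)
  · rintro ⟨D, E, hD, hE, hbound⟩
    obtain ⟨C, hC, hshift⟩ := exists_pow_mul_factorial_le_of_le_add hD hE (-d).toNat
    refine ⟨C, by positivity, fun k hk => ?_⟩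
    rw [coeff_single_one_mul_coe]
    split_ifs with hkd
    · rw [norm_zero]; positivity
    · exact (hbound _).trans (hshift _ _ (by omega) (by omega))

theorem inv_eq_single_mul_coe_inv_powerSeriesPart {K : Type*} [Field K] (f : K⸨X⸩) :
    f⁻¹ = (single (-f.order) 1 : K⸨X⸩) * (f.powerSeriesPart⁻¹ : K⟦X⟧) := by
  rcases eq_or_ne f 0 with rfl | hf
  · simp
  have h0 : constantCoeff f.powerSeriesPart ≠ 0 := by
    rw [← coeff_zero_eq_constantCoeff_apply, powerSeriesPart_coeff, Nat.cast_zero, add_zero]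
    exact coeff_order_eq_zero.not.2 hf
  refine inv_eq_of_mul_eq_one_right ?_
  calc f * ((single (-f.order) 1 : K⸨X⸩) * (f.powerSeriesPart⁻¹ : K⟦X⟧))
      = ((single (-f.order) 1 : K⸨X⸩) * f) * (f.powerSeriesPart⁻¹ : K⟦X⟧) := by ring
    _ = ((f.powerSeriesPart * f.powerSeriesPart⁻¹ : K⟦X⟧) : K⸨X⸩) := by
      rw [← ofPowerSeries_powerSeriesPart, map_mul]
    _ = 1 := by rw [PowerSeries.mul_inv_cancel _ h0, map_one]

theorem HasFactorialGrowth.inv {K : Type*} [NormedField K] {f : K⸨X⸩}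
    (hf : HasFactorialGrowth f) : HasFactorialGrowth f⁻¹ := by
  rw [← single_order_mul_powerSeriesPart f, hasFactorialGrowth_single_one_mul_coe_iff] at hf
  rw [inv_eq_single_mul_coe_inv_powerSeriesPart, hasFactorialGrowth_single_one_mul_coe_iff]
  exact hf.inv

end LaurentSeries

theorem stmt_8_general (f : LaurentSeries ℂ)
    (h : ∃ C : ℝ, 0 < C ∧ ∀ k : ℤ, 1 ≤ k →
      ‖f.coeff k‖ ≤ C ^ k.toNat * (k.toNat).factorial) :
    ∃ C : ℝ, 0 < C ∧ ∀ k : ℤ, 1 ≤ k →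
      ‖(f⁻¹).coeff k‖ ≤ C ^ k.toNat * (k.toNat).factorial :=
  LaurentSeries.HasFactorialGrowth.inv h

/-- the set
`K = {f ∈ ℂ((t)) : ∃ C > 0, |coeff_k f| ≤ C^k·k! for all k ≥ 1}` is closed under
taking inverses in the field `ℂ((t))`; hence `K` is a subfield (this is the field
`𝐤 = 𝒲_pt` of Definition 7.3 of the paper, under the substitution `τ = t⁻¹`). -/
theorem stmt_8 (f : LaurentSeries ℂ) (hf : f ≠ 0)
    (h : ∃ C : ℝ, 0 < C ∧ ∀ k : ℤ, 1 ≤ k →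
      ‖f.coeff k‖ ≤ C ^ k.toNat * (k.toNat).factorial) :
    ∃ C : ℝ, 0 < C ∧ ∀ k : ℤ, 1 ≤ k →
      ‖(f⁻¹).coeff k‖ ≤ C ^ k.toNat * (k.toNat).factorial :=
  stmt_8_general f h
end

section
/- Let R be a ring, A an additive commutative group, and δ : A → Aut(R) a map into ring automorphisms of R with δ(a + a′) = δ(a) ∘ δ(a′) and δ(0) = id. For each pair 0 ≤ i < j ≤ 3 let Φ_{ij} be a ring automorphism of R, and for each triple 0 ≤ i < j < k ≤ 3 let P_{ijk} be a unit of R and c_{ijk} ∈ A. Assume: (a) δ(a) ∘ Φ_{ij} = Φ_{ij} ∘ δ(a) for all a ∈ A and all 0 ≤ i < j ≤ 3; (b) δ(a)(P_{ijk}) = P_{ijk} for all a ∈ A and all triples; (c) Φ_{ij} ∘ Φ_{jk} = Ad(P_{ijk}) ∘ δ(c_{ijk}) ∘ Φ_{ik} for all 0 ≤ i < j < k ≤ 3. Then Ad(P_{012} · P_{023}) ∘ δ(c_{012} + c_{023}) = Ad(Φ_{01}(P_{123}) · P_{013}) ∘ δ(c_{123} + c_{013}). -/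
/-- the associativity computation in the proof of Theorem 9.1 of the
paper: from `Φ_{ij} ∘ Φ_{jk} = Ad(P_{ijk}) ∘ δ(c_{ijk}) ∘ Φ_{ik}`, where the `δ(a)`
commute with the `Φ_{ij}` and fix the `P_{ijk}`, one deduces
`Ad(P₀₁₂·P₀₂₃) ∘ δ(c₀₁₂+c₀₂₃) = Ad(Φ₀₁(P₁₂₃)·P₀₁₃) ∘ δ(c₁₂₃+c₀₁₃)`. -/
theorem stmt_10 (R : Type*) [Ring R] (A : Type*) [AddCommGroup A]
    (δ : A → (R ≃+* R))
    (hδadd : ∀ a a' : A, ∀ b : R, δ (a + a') b = δ a (δ a' b))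
    (hδzero : ∀ b : R, δ 0 b = b)
    (Φ : Fin 4 → Fin 4 → (R ≃+* R))
    (P : Fin 4 → Fin 4 → Fin 4 → Rˣ) (c : Fin 4 → Fin 4 → Fin 4 → A)
    (hcomm : ∀ a : A, ∀ i j : Fin 4, i < j → ∀ b : R, δ a (Φ i j b) = Φ i j (δ a b))
    (hfix : ∀ a : A, ∀ i j k : Fin 4, i < j → j < k → δ a (↑(P i j k) : R) = ↑(P i j k))
    (hcoc : ∀ i j k : Fin 4, i < j → j < k → ∀ b : R,
      Φ i j (Φ j k b) = (↑(P i j k) : R) * δ (c i j k) (Φ i k b) * (↑(P i j k)⁻¹ : R)) :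
    ∀ b : R,
      ((↑(P 0 1 2) : R) * ↑(P 0 2 3)) * δ (c 0 1 2 + c 0 2 3) b
          * ((↑(P 0 2 3)⁻¹ : R) * ↑(P 0 1 2)⁻¹)
        = (Φ 0 1 (↑(P 1 2 3) : R) * ↑(P 0 1 3)) * δ (c 1 2 3 + c 0 1 3) b
          * ((↑(P 0 1 3)⁻¹ : R) * Φ 0 1 (↑(P 1 2 3)⁻¹ : R)) := by
  intro b
  -- δ fixes inverses of the P's as well
  have hfix' : ∀ a : A, ∀ i j k : Fin 4, i < j → j < k →
      δ a (↑(P i j k)⁻¹ : R) = (↑(P i j k)⁻¹ : R) := by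
    intro a i j k hij hjk
    have h1 : δ a (↑(P i j k)⁻¹ : R) * (↑(P i j k) : R) = 1 := by
      rw [← hfix a i j k hij hjk, ← map_mul, Units.inv_mul, map_one]
    calc δ a (↑(P i j k)⁻¹ : R)
        = δ a (↑(P i j k)⁻¹ : R) * ((↑(P i j k) : R) * (↑(P i j k)⁻¹ : R)) := by
          rw [Units.mul_inv, mul_one]
      _ = (↑(P i j k)⁻¹ : R) := by rw [← mul_assoc, h1, one_mul]
  set x := (Φ 0 3).symm b with hx
  have hb : Φ 0 3 x = b := (Φ 0 3).apply_symm_apply b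
  have h12 : (1 : Fin 4) < 2 := by decide
  have h01 : (0 : Fin 4) < 1 := by decide
  have h02 : (0 : Fin 4) < 2 := by decide
  have h03 : (0 : Fin 4) < 3 := by decide
  have h13 : (1 : Fin 4) < 3 := by decide
  have h23 : (2 : Fin 4) < 3 := by decide
  have L : Φ 0 1 (Φ 1 2 (Φ 2 3 x)) =
      ((↑(P 0 1 2) : R) * ↑(P 0 2 3)) * δ (c 0 1 2 + c 0 2 3) b
        * ((↑(P 0 2 3)⁻¹ : R) * ↑(P 0 1 2)⁻¹) := by
    rw [hcoc 0 1 2 h01 h12, hcoc 0 2 3 h02 h23, hb, map_mul, map_mul,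
      hfix _ 0 2 3 h02 h23, hfix' _ 0 2 3 h02 h23, ← hδadd]
    simp only [mul_assoc]
  have Rr : Φ 0 1 (Φ 1 2 (Φ 2 3 x)) =
      (Φ 0 1 (↑(P 1 2 3) : R) * ↑(P 0 1 3)) * δ (c 1 2 3 + c 0 1 3) b
        * ((↑(P 0 1 3)⁻¹ : R) * Φ 0 1 (↑(P 1 2 3)⁻¹ : R)) := by
    rw [hcoc 1 2 3 h12 h23, map_mul, map_mul, ← hcomm _ 0 1 h01,
      hcoc 0 1 3 h01 h13, hb, map_mul, map_mul,
      hfix _ 0 1 3 h01 h13, hfix' _ 0 1 3 h01 h13, ← hδadd]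
    simp only [mul_assoc]
  rw [← L, Rr]
end

section
/- Let R and S be rings, A an additive commutative group, and δ_R : A → Aut(R), δ_S : A → Aut(S) maps into ring automorphisms with δ_R(a + a′) = δ_R(a) ∘ δ_R(a′) and δ_S(a + a′) = δ_S(a) ∘ δ_S(a′). For 0 ≤ i < j ≤ 2 let Φ_{ij} ∈ Aut(R), Φ′_{ij} ∈ Aut(S) and Q_{ij} ∈ Sˣ, b_{ij} ∈ A; for i = 0, 1, 2 let Υ_i : R → S be ring isomorphisms; let P ∈ Rˣ, P′ ∈ Sˣ and c, c′ ∈ A. Assume: (a) δ_S(a) ∘ Φ′_{ij} = Φ′_{ij} ∘ δ_S(a) for all a and all i < j; (b) δ_S(a)(Q_{ij}) = Q_{ij} for all a and all i < j; (c) Υ_i ∘ δ_R(a) = δ_S(a) ∘ Υ_i for all a and all i; (d) δ_R(a)(P) = P for all a; (e) Φ_{01} ∘ Φ_{12} = Ad(P) ∘ δ_R(c) ∘ Φ_{02}; (f) Φ′_{01} ∘ Φ′_{12} = Ad(P′) ∘ δ_S(c′) ∘ Φ′_{02}; (g) Φ′_{ij} ∘ Υ_j = Ad(Q_{ij}) ∘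 δ_S(b_{ij}) ∘ Υ_i ∘ Φ_{ij} for all 0 ≤ i < j ≤ 2. Then Ad(P′ · Q_{02}) ∘ δ_S(c′ + b_{02}) = Ad(Φ′_{01}(Q_{12}) · Q_{01} · Υ_0(P)) ∘ δ_S(b_{12} + b_{01} + c). -/
/-- If a ring automorphism fixes (the coercion of) a unit, it fixes its inverse. -/
theorem stmt_11_aux_inv {S : Type*} [Ring S] (e : S ≃+* S) (Q : Sˣ) (h : e ↑Q = ↑Q) :
    e (↑Q⁻¹ : S) = (↑Q⁻¹ : S) := by
  have h1 : e ((↑Q⁻¹ : S) * ↑Q) = 1 := by rw [Units.inv_mul, map_one]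
  rw [map_mul, h] at h1
  calc e (↑Q⁻¹ : S) = e (↑Q⁻¹ : S) * ↑Q * ↑Q⁻¹ := by rw [mul_assoc, Units.mul_inv, mul_one]
    _ = ↑Q⁻¹ := by rw [h1, one_mul]

/-- the comparison computation in the proof of Theorem 9.1 of the paper,
showing that two choices of symplectic local charts yield effectively isomorphic liens:
`Ad(P′·Q₀₂) ∘ δ_S(c′+b₀₂) = Ad(Φ′₀₁(Q₁₂)·Q₀₁·Υ₀(P)) ∘ δ_S(b₁₂+b₀₁+c)`. -/
theorem stmt_11 (R S : Type*) [Ring R] [Ring S] (A : Type*) [AddCommGroup A]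
    (δR : A → (R ≃+* R)) (δS : A → (S ≃+* S))
    (hδRadd : ∀ a a' : A, ∀ x : R, δR (a + a') x = δR a (δR a' x))
    (hδSadd : ∀ a a' : A, ∀ y : S, δS (a + a') y = δS a (δS a' y))
    (Φ : Fin 3 → Fin 3 → (R ≃+* R)) (Φ' : Fin 3 → Fin 3 → (S ≃+* S))
    (Q : Fin 3 → Fin 3 → Sˣ) (b : Fin 3 → Fin 3 → A)
    (Υ : Fin 3 → (R ≃+* S))
    (P : Rˣ) (P' : Sˣ) (c c' : A)
    (ha : ∀ a : A, ∀ i j : Fin 3, i < j → ∀ y : S, δS a (Φ' i j y) = Φ' i j (δS a y))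
    (hb : ∀ a : A, ∀ i j : Fin 3, i < j → δS a (↑(Q i j) : S) = ↑(Q i j))
    (hc : ∀ a : A, ∀ i : Fin 3, ∀ x : R, Υ i (δR a x) = δS a (Υ i x))
    (hd : ∀ a : A, δR a (↑P : R) = ↑P)
    (he : ∀ x : R, Φ 0 1 (Φ 1 2 x) = (↑P : R) * δR c (Φ 0 2 x) * (↑P⁻¹ : R))
    (hf : ∀ y : S, Φ' 0 1 (Φ' 1 2 y) = (↑P' : S) * δS c' (Φ' 0 2 y) * (↑P'⁻¹ : S))
    (hg : ∀ i j : Fin 3, i < j → ∀ x : R,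
      Φ' i j (Υ j x) = (↑(Q i j) : S) * δS (b i j) (Υ i (Φ i j x)) * (↑(Q i j)⁻¹ : S)) :
    ∀ y : S,
      ((↑P' : S) * ↑(Q 0 2)) * δS (c' + b 0 2) y * ((↑(Q 0 2)⁻¹ : S) * (↑P'⁻¹ : S))
        = (Φ' 0 1 (↑(Q 1 2) : S) * ↑(Q 0 1) * Υ 0 (↑P : R))
            * δS (b 1 2 + b 0 1 + c) y
            * (Υ 0 (↑P⁻¹ : R) * (↑(Q 0 1)⁻¹ : S) * Φ' 0 1 (↑(Q 1 2)⁻¹ : S)) := by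
  intro y
  have h01 : (0 : Fin 3) < 1 := by decide
  have h12 : (1 : Fin 3) < 2 := by decide
  have h02 : (0 : Fin 3) < 2 := by decide
  set x : R := (Φ 0 2).symm ((Υ 0).symm y) with hx
  have hxy : Υ 0 (Φ 0 2 x) = y := by
    rw [hx, RingEquiv.apply_symm_apply, RingEquiv.apply_symm_apply]
  -- the common middle term
  have key1 : Φ' 0 1 (Φ' 1 2 (Υ 2 x))
      = ((↑P' : S) * ↑(Q 0 2)) * δS (c' + b 0 2) y * ((↑(Q 0 2)⁻¹ : S) * (↑P'⁻¹ : S)) := by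
    rw [hf, hg 0 2 h02, map_mul, map_mul, hb c' 0 2 h02,
      stmt_11_aux_inv (δS c') (Q 0 2) (hb c' 0 2 h02), hxy, ← hδSadd]
    simp only [mul_assoc]
  have key2 : Φ' 0 1 (Φ' 1 2 (Υ 2 x))
      = (Φ' 0 1 (↑(Q 1 2) : S) * ↑(Q 0 1) * Υ 0 (↑P : R))
          * δS (b 1 2 + b 0 1 + c) y
          * (Υ 0 (↑P⁻¹ : R) * (↑(Q 0 1)⁻¹ : S) * Φ' 0 1 (↑(Q 1 2)⁻¹ : S)) := by
    have hP : δR c (↑P⁻¹ : R) = (↑P⁻¹ : R) :=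
      stmt_11_aux_inv (δR c) P (hd c)
    have hUP : ∀ a : A, δS a (Υ 0 (↑P : R)) = Υ 0 (↑P : R) := fun a => by
      rw [← hc, hd]
    have hUPinv : ∀ a : A, δS a (Υ 0 (↑P⁻¹ : R)) = Υ 0 (↑P⁻¹ : R) := fun a => by
      rw [← hc, stmt_11_aux_inv (δR a) P (hd a)]
    have step1 : Φ' 0 1 (Φ' 1 2 (Υ 2 x))
        = Φ' 0 1 (↑(Q 1 2) : S) * δS (b 1 2) (Φ' 0 1 (Υ 1 (Φ 1 2 x)))
            * Φ' 0 1 (↑(Q 1 2)⁻¹ : S) := by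
      rw [hg 1 2 h12, map_mul, map_mul, ha]
      exact h01
    rw [step1, hg 0 1 h01, he]
    simp only [map_mul]
    rw [hc, hxy, hUP, hUPinv, hUP, hUPinv, hb (b 1 2) 0 1 h01,
      stmt_11_aux_inv (δS (b 1 2)) (Q 0 1) (hb (b 1 2) 0 1 h01)]
    simp only [hδSadd, mul_assoc]
  rw [← key1, key2]
end

section
/- Fix n ≥ 1 and an open set U ⊆ ℂⁿ × ℂⁿ. Let p be a formal WKB symbol on U with p_j = 0 for all j > 0, and let s : U → ℂ be a holomorphic, nowhere vanishing function with s² = p_0. Then there exists a unique formal WKB symbol q on U with q_j = 0 for all j > 0, q_0 = s, and q★q = p. -/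
open scoped BigOperators

/-- The phase space `ℂⁿ × ℂⁿ` with coordinates `(x, u)`. -/
abbrev Phase (n : ℕ) := (Fin n → ℂ) × (Fin n → ℂ)

/-- The partial derivative `∂_{x_i}` of a function on `ℂⁿ × ℂⁿ`. -/
noncomputable def pdx {n : ℕ} (i : Fin n) (h : Phase n → ℂ) : Phase n → ℂ :=
  fun z => fderiv ℂ h z (Pi.single i 1, 0)

/-- The partial derivative `∂_{u_i}` of a function on `ℂⁿ × ℂⁿ`. -/
noncomputable def pdu {n : ℕ} (i : Fin n) (h : Phase n → ℂ) : Phase n → ℂ :=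
  fun z => fderiv ℂ h z (0, Pi.single i 1)

/-- The iterated partial derivative `∂_x^α`. -/
noncomputable def dX {n : ℕ} (α : Fin n → ℕ) (h : Phase n → ℂ) : Phase n → ℂ :=
  ((List.finRange n).foldr (fun i F => (pdx i)^[α i] ∘ F) id) h

/-- The iterated partial derivative `∂_u^α`. -/
noncomputable def dU {n : ℕ} (α : Fin n → ℕ) (h : Phase n → ℂ) : Phase n → ℂ :=
  ((List.finRange n).foldr (fun i F => (pdu i)^[α i] ∘ F) id) h

/-- The Leibniz product of two (coefficient families of) formal WKB symbols:
`(p★q)_j = Σ_{α ∈ ℕⁿ, k+l−|α|=j} (1/α!) · ∂_u^α p_k · ∂_x^α q_l`,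
written as a `finsum` over the pairs `(α, k)` (with `l = j + |α| − k`);
for symbols vanishing in large degrees this sum has finite support. -/
noncomputable def leibniz {n : ℕ} (p q : ℤ → Phase n → ℂ) : ℤ → Phase n → ℂ :=
  fun j z => ∑ᶠ ak : (Fin n → ℕ) × ℤ,
    ((∏ i, (ak.1 i).factorial : ℕ) : ℂ)⁻¹
      * dU ak.1 (p ak.2) z
      * dX ak.1 (q (j + ((∑ i, ak.1 i : ℕ) : ℤ) - ak.2)) z

/-- The unit symbol `1`. -/
def oneSymbol (n : ℕ) : ℤ → Phase n → ℂ := fun j _ => if j = 0 then 1 else 0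

/-!
In degree `j < 0`, the only terms of `(q★q)_j` involving `q_j` are `q_0 q_j + q_j q_0 = 2 s q_j`
(vanishing in positive degrees kills every other term containing `q_j` or a lower degree); the rest
only involves `q_{j+1}, …, q_0`. Since `s` has no zeros, `(q★q)_j = p_j` determines `q_j`, so the
coefficients are found, and are unique, by downward recursion from `q_0 = s`. They stay holomorphic
because a partial derivative of a holomorphic function of several variables is holomorphic: on
each complex line it is a Cauchy integral, which may be differentiated under the integral sign
thanks to the Cauchy estimates.
-/

open scoped Real Topology
open Metric Complex

section FDerivHolomorphic

variable {E F : Type*} [NormedAddCommGroup E] [NormedSpace ℂ E]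
  [NormedAddCommGroup F] [NormedSpace ℂ F] {f : E → F} {U : Set E}

lemma hasDerivAt_comp_add_smul {z w : E} (hf : DifferentiableAt ℂ f z) :
    HasDerivAt (fun t : ℂ => f (z + t • w)) (fderiv ℂ f z w) 0 := by
  have hline : HasDerivAt (fun t : ℂ => z + t • w) w 0 :=
    ((hasDerivAt_id (0 : ℂ)).smul_const w).const_add z |>.congr_deriv (one_smul ℂ w)
  exact (by simpa using hf.hasFDerivAt : HasFDerivAt f (fderiv ℂ f z) (z + (0 : ℂ) • w))
    |>.comp_hasDerivAt 0 hline

lemma fderiv_apply_eq_cderiv [CompleteSpace F] (hU : IsOpen U) (hf : DifferentiableOn ℂ f U)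
    {z w : E} {r : ℝ} (hr : 0 < r) (hzw : ∀ t : ℂ, ‖t‖ ≤ r → z + t • w ∈ U) :
    fderiv ℂ f z w = cderiv r (fun t => f (z + t • w)) 0 := by
  have hline : Continuous fun t : ℂ => z + t • w := by fun_prop
  have hz : z ∈ U := by simpa using hzw 0 (by simp [hr.le])
  rw [cderiv_eq_deriv (f := fun t => f (z + t • w)) (hU.preimage hline)
    (hf.comp (by fun_prop) fun t ht => ht) hr (fun t ht => hzw t (by simpa using ht)),
    (hasDerivAt_comp_add_smul (hf.differentiableAt (hU.mem_nhds hz))).deriv]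

lemma eventually_norm_fderiv_le [CompleteSpace F] (hU : IsOpen U) (hf : DifferentiableOn ℂ f U)
    {z₀ : E} (hz₀ : z₀ ∈ U) : ∃ C, ∀ᶠ z in 𝓝 z₀, ‖fderiv ℂ f z‖ ≤ C := by
  obtain ⟨δ, hδ, hball⟩ : ∃ δ > 0, ball z₀ δ ⊆ U ∩ {y | ‖f y‖ ≤ ‖f z₀‖ + 1} := by
    refine Metric.mem_nhds_iff.mp (Filter.inter_mem (hU.mem_nhds hz₀) ?_)
    have hc := (hf.continuousOn.continuousAt (hU.mem_nhds hz₀)).norm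
    exact hc.eventually (eventually_le_nhds (lt_add_one _))
  refine ⟨4 * (‖f z₀‖ + 1) / δ, Filter.mem_of_superset (ball_mem_nhds z₀ (half_pos hδ)) ?_⟩
  intro z hz
  refine ContinuousLinearMap.opNorm_le_bound _ (by positivity) fun w => ?_
  rcases eq_or_ne w 0 with rfl | hw
  · simp
  have hρ : 0 < δ / (4 * ‖w‖) := by positivity
  have hmem : ∀ t : ℂ, ‖t‖ ≤ δ / (4 * ‖w‖) → z + t • w ∈ ball z₀ δ := by
    intro t ht
    have htw : ‖t • w‖ ≤ δ / 4 := by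
      rw [norm_smul]
      calc ‖t‖ * ‖w‖ ≤ δ / (4 * ‖w‖) * ‖w‖ := by gcongr
        _ = δ / 4 := by field_simp
    rw [mem_ball, dist_eq_norm, add_sub_right_comm]
    calc ‖z - z₀ + t • w‖ ≤ ‖z - z₀‖ + ‖t • w‖ := norm_add_le _ _
      _ < δ / 2 + δ / 4 := add_lt_add_of_lt_of_le (by simpa [dist_eq_norm] using hz) htw
      _ ≤ δ := by linarith
  rw [fderiv_apply_eq_cderiv hU hf hρ fun t ht => (hball (hmem t ht)).1]
  calc _ ≤ (‖f z₀‖ + 1) / (δ / (4 * ‖w‖)) :=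
        norm_cderiv_le hρ fun t ht => (hball (hmem t (by simp_all))).2
    _ = 4 * (‖f z₀‖ + 1) / δ * ‖w‖ := by field_simp

lemma differentiableAt_cderiv_comp_add_smul [FiniteDimensional ℂ E] [CompleteSpace F]
    [SecondCountableTopology F] {s K : Set E} {z₀ v : E} {r C : ℝ} (hr : 0 < r) (hs : s ∈ 𝓝 z₀)
    (hK : ∀ x ∈ s, ∀ t ∈ sphere (0 : ℂ) r, x + t • v ∈ K)
    (hfK : ∀ y ∈ K, DifferentiableAt ℂ f y) (hC : ∀ y ∈ K, ‖fderiv ℂ f y‖ ≤ C) :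
    DifferentiableAt ℂ (fun x => cderiv r (fun t => f (x + t • v)) 0) z₀ := by
  borelize E
  have hγ : ∀ θ, circleMap 0 r θ ∈ sphere (0 : ℂ) r := circleMap_mem_sphere 0 hr.le
  have hweight : Continuous fun θ => deriv (circleMap 0 r) θ • ((circleMap 0 r θ - 0) ^ 2)⁻¹ := by
    simp only [deriv_circleMap, sub_zero]
    exact ((continuous_circleMap 0 r).mul continuous_const).smul
      ((continuous_circleMap 0 r).pow 2 |>.inv₀ fun θ => pow_ne_zero 2 (circleMap_ne_center hr.ne'))
  have hF : ∀ x ∈ s, Continuous fun θ =>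
      deriv (circleMap 0 r) θ • ((circleMap 0 r θ - 0) ^ 2)⁻¹ • f (x + circleMap 0 r θ • v) := by
    intro x hx
    refine continuous_iff_continuousAt.2 fun θ => ?_
    simp only [← smul_assoc]
    exact hweight.continuousAt.smul
      ((hfK _ (hK x hx _ (hγ θ))).continuousAt.comp
        (f := fun θ : ℝ => x + circleMap 0 r θ • v) (by fun_prop))
  have hderiv := intervalIntegral.hasFDerivAt_integral_of_dominated_of_fderiv_le
    (μ := MeasureTheory.volume) (a := 0) (b := 2 * π)
    (F' := fun x θ => deriv (circleMap 0 r) θ • ((circleMap 0 r θ - 0) ^ 2)⁻¹ •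
      fderiv ℂ f (x + circleMap 0 r θ • v))
    (bound := fun _ => r * ((r ^ 2)⁻¹ * C)) hs
    (Filter.eventually_of_mem hs fun x hx => (hF x hx).aestronglyMeasurable)
    ((hF z₀ (mem_of_mem_nhds hs)).intervalIntegrable 0 (2 * π))
    (by
      simp only [← smul_assoc]
      exact (hweight.measurable.smul
        ((measurable_fderiv ℂ f).comp (by fun_prop))).aestronglyMeasurable)
    (Filter.Eventually.of_forall fun θ _ x hx => by
      have hnorm : ‖circleMap 0 r θ‖ = r := by simp [abs_of_pos hr]
      simp only [norm_smul, deriv_circleMap, norm_mul, norm_I, hnorm, sub_zero, norm_inv,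
        norm_pow, mul_one]
      gcongr
      exact hC _ (hK x hx _ (hγ θ)))
    intervalIntegrable_const
    (Filter.Eventually.of_forall fun θ _ x hx =>
      (((hasFDerivAt_comp_add_right _).2 (hfK _ (hK x hx _ (hγ θ))).hasFDerivAt).const_smul
        _).const_smul _)
  -- `cderiv r g 0` unfolds to `(2πi)⁻¹ • ∫₀^{2π} γ' θ • ((γ θ - 0) ^ 2)⁻¹ • g (γ θ)`
  exact hderiv.differentiableAt.const_smul _

lemma DifferentiableOn.differentiableOn_fderiv_apply [FiniteDimensional ℂ E] [CompleteSpace F]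
    [SecondCountableTopology F] (hU : IsOpen U) (hf : DifferentiableOn ℂ f U) (v : E) :
    DifferentiableOn ℂ (fun z => fderiv ℂ f z v) U := by
  intro z₀ hz₀
  obtain ⟨C, hC⟩ := eventually_norm_fderiv_le hU hf hz₀
  obtain ⟨δ, hδ, hball⟩ := Metric.mem_nhds_iff.mp (Filter.inter_mem (hU.mem_nhds hz₀) hC)
  set r := δ / (2 * (‖v‖ + 1))
  have hr : 0 < r := by positivity
  have hmem : ∀ x ∈ ball z₀ (δ / 2), ∀ t : ℂ, ‖t‖ ≤ r → x + t • v ∈ ball z₀ δ := by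
    intro x hx t ht
    have htv : ‖t • v‖ ≤ δ / 2 := by
      rw [norm_smul]
      calc ‖t‖ * ‖v‖ ≤ r * (‖v‖ + 1) := by gcongr; linarith
        _ = δ / 2 := by simp only [r]; field_simp
    rw [mem_ball, dist_eq_norm, add_sub_right_comm]
    calc ‖x - z₀ + t • v‖ ≤ ‖x - z₀‖ + ‖t • v‖ := norm_add_le _ _
      _ < δ / 2 + δ / 2 := add_lt_add_of_lt_of_le (by simpa [dist_eq_norm] using hx) htv
      _ = δ := by ring
  have hcauchy : ∀ x ∈ ball z₀ (δ / 2),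
      fderiv ℂ f x v = cderiv r (fun t => f (x + t • v)) 0 := fun x hx =>
    fderiv_apply_eq_cderiv hU hf hr fun t ht => (hball (hmem x hx t ht)).1
  refine DifferentiableAt.differentiableWithinAt ?_
  refine (differentiableAt_cderiv_comp_add_smul hr (ball_mem_nhds z₀ (half_pos hδ))
    (fun x hx t ht => hball (hmem x hx t (by simp_all)))
    (fun y hy => hf.differentiableAt (hU.mem_nhds hy.1)) fun y hy => hy.2).congr_of_eventuallyEq
    (Filter.eventuallyEq_of_mem (ball_mem_nhds z₀ (half_pos hδ)) hcauchy)

end FDerivHolomorphic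

lemma List.foldr_iterate_rel {X ι : Type*} (R : X → X → Prop) (T : ι → X → X)
    (hT : ∀ i x y, R x y → R (T i x) (T i y)) (α : ι → ℕ) (L : List ι) {x y : X}
    (hxy : R x y) :
    R (L.foldr (fun i F => (T i)^[α i] ∘ F) id x)
      (L.foldr (fun i F => (T i)^[α i] ∘ F) id y) := by
  induction L with
  | nil => exact hxy
  | cons i L ih =>
    simp only [List.foldr_cons, Function.comp_apply]
    induction α i with
    | zero => exact ih
    | succ m ihm =>
      simp only [Function.iterate_succ_apply']
      exact hT _ _ _ ihm

section PartialDerivatives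

variable {n : ℕ} {U : Set (Phase n)} {f g : Phase n → ℂ}

lemma pdx_zero_fun (i : Fin n) : pdx i (0 : Phase n → ℂ) = 0 := by
  funext z; simp [pdx]

lemma pdu_zero_fun (i : Fin n) : pdu i (0 : Phase n → ℂ) = 0 := by
  funext z; simp [pdu]

lemma dX_zero_fun (α : Fin n → ℕ) : dX α (0 : Phase n → ℂ) = 0 :=
  List.foldr_iterate_rel (fun h _ => h = 0) pdx (fun i _ _ hf => hf ▸ pdx_zero_fun i) α _ rfl
    (y := 0)

lemma dU_zero_fun (α : Fin n → ℕ) : dU α (0 : Phase n → ℂ) = 0 :=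
  List.foldr_iterate_rel (fun h _ => h = 0) pdu (fun i _ _ hf => hf ▸ pdu_zero_fun i) α _ rfl
    (y := 0)

lemma dX_zero (f : Phase n → ℂ) : dX 0 f = f := by
  simp [dX]

lemma dU_zero (f : Phase n → ℂ) : dU 0 f = f := by
  simp [dU]

lemma differentiableOn_dX (hU : IsOpen U) (hf : DifferentiableOn ℂ f U) (α : Fin n → ℕ) :
    DifferentiableOn ℂ (dX α f) U :=
  List.foldr_iterate_rel (fun h _ => DifferentiableOn ℂ h U) pdx
    (fun _ _ _ hf => hf.differentiableOn_fderiv_apply hU _) α _ hf (y := f)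

lemma differentiableOn_dU (hU : IsOpen U) (hf : DifferentiableOn ℂ f U) (α : Fin n → ℕ) :
    DifferentiableOn ℂ (dU α f) U :=
  List.foldr_iterate_rel (fun h _ => DifferentiableOn ℂ h U) pdu
    (fun _ _ _ hf => hf.differentiableOn_fderiv_apply hU _) α _ hf (y := f)

lemma eqOn_fderiv_apply (hU : IsOpen U) (hfg : U.EqOn f g) (v : Phase n) :
    U.EqOn (fun z => fderiv ℂ f z v) (fun z => fderiv ℂ g z v) :=
  fun z hz => by simp only [(hfg.eventuallyEq_of_mem (hU.mem_nhds hz)).fderiv_eq]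

lemma eqOn_dX (hU : IsOpen U) (hfg : U.EqOn f g) (α : Fin n → ℕ) : U.EqOn (dX α f) (dX α g) :=
  List.foldr_iterate_rel U.EqOn pdx (fun _ _ _ h => eqOn_fderiv_apply hU h _)
    α _ hfg

lemma eqOn_dU (hU : IsOpen U) (hfg : U.EqOn f g) (α : Fin n → ℕ) : U.EqOn (dU α f) (dU α g) :=
  List.foldr_iterate_rel U.EqOn pdu (fun _ _ _ h => eqOn_fderiv_apply hU h _)
    α _ hfg

end PartialDerivatives

section Leibniz

variable {n : ℕ} {U : Set (Phase n)} {a b : ℤ → Phase n → ℂ}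

noncomputable def leibnizTerm (a b : ℤ → Phase n → ℂ) (j : ℤ) (z : Phase n)
    (ak : (Fin n → ℕ) × ℤ) : ℂ :=
  ((∏ i, (ak.1 i).factorial : ℕ) : ℂ)⁻¹ * dU ak.1 (a ak.2) z
    * dX ak.1 (b (j + ((∑ i, ak.1 i : ℕ) : ℤ) - ak.2)) z

/-- The indices `(α, k)` that can contribute to `(a★b)_j` when `a` and `b` vanish in positive
degrees: then `k ≤ 0` and `l = j + |α| - k ≤ 0` force `j ≤ k` and `|α| ≤ -j`. -/
noncomputable def leibnizSupport (n : ℕ) (j : ℤ) : Finset ((Fin n → ℕ) × ℤ) :=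
  Finset.Iic (fun _ => (-j).toNat) ×ˢ Finset.Icc j 0

lemma leibnizTerm_eq_zero_of_left {j k : ℤ} {z : Phase n} (α : Fin n → ℕ) (ha : a k = 0) :
    leibnizTerm a b j z (α, k) = 0 := by
  simp [leibnizTerm, ha, dU_zero_fun]

lemma leibnizTerm_eq_zero_of_right {j k : ℤ} {z : Phase n} {α : Fin n → ℕ}
    (hb : b (j + ((∑ i, α i : ℕ) : ℤ) - k) = 0) : leibnizTerm a b j z (α, k) = 0 := by
  simp only [leibnizTerm]
  rw [hb, dX_zero_fun, Pi.zero_apply, mul_zero]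

lemma leibnizTerm_zero_index (j k : ℤ) (z : Phase n) :
    leibnizTerm a b j z (0, k) = a k z * b (j - k) z := by
  simp [leibnizTerm, dU_zero, dX_zero]

lemma leibniz_eq_sum (ha : ∀ k, 0 < k → a k = 0) (hb : ∀ k, 0 < k → b k = 0) (j : ℤ)
    (z : Phase n) : leibniz a b j z = ∑ ak ∈ leibnizSupport n j, leibnizTerm a b j z ak := by
  refine finsum_eq_finsetSum_of_support_subset _ fun ⟨α, k⟩ hak => ?_
  have hk : k ≤ 0 := by
    by_contra! hk
    exact hak (leibnizTerm_eq_zero_of_left α (ha k hk))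
  have hl : j + ((∑ i, α i : ℕ) : ℤ) - k ≤ 0 := by
    by_contra! hl
    exact hak (leibnizTerm_eq_zero_of_right (hb _ hl))
  have hα : ∀ i, α i ≤ ∑ i, α i := fun i =>
    Finset.single_le_sum (fun _ _ => Nat.zero_le _) (Finset.mem_univ i)
  simp only [leibnizSupport, Finset.coe_product, Set.mem_prod, Finset.coe_Iic, Finset.coe_Icc,
    Set.mem_Iic, Set.mem_Icc]
  exact ⟨fun i => by have := hα i; show α i ≤ (-j).toNat; omega, by omega, hk⟩

lemma leibniz_congr (hU : IsOpen U) {a' b' : ℤ → Phase n → ℂ} (ha : ∀ k, U.EqOn (a k) (a' k))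
    (hb : ∀ k, U.EqOn (b k) (b' k)) (j : ℤ) : U.EqOn (leibniz a b j) (leibniz a' b' j) :=
  fun z hz => finsum_congr fun ak => by
    rw [eqOn_dU hU (ha _) _ hz, eqOn_dX hU (hb _) _ hz]

lemma differentiableOn_leibniz (hU : IsOpen U) (ha0 : ∀ k, 0 < k → a k = 0)
    (hb0 : ∀ k, 0 < k → b k = 0) (ha : ∀ k, DifferentiableOn ℂ (a k) U)
    (hb : ∀ k, DifferentiableOn ℂ (b k) U) (j : ℤ) : DifferentiableOn ℂ (leibniz a b j) U := by
  rw [show leibniz a b j = _ from funext (leibniz_eq_sum ha0 hb0 j)]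
  exact DifferentiableOn.fun_sum fun ak _ =>
    ((differentiableOn_const _).mul (differentiableOn_dU hU (ha _) _)).mul
      (differentiableOn_dX hU (hb _) _)

lemma leibniz_of_pos (ha : ∀ k, 0 < k → a k = 0) (hb : ∀ k, 0 < k → b k = 0) {j : ℤ}
    (hj : 0 < j) : leibniz a b j = 0 := by
  funext z
  rw [leibniz_eq_sum ha hb, leibnizSupport, Finset.Icc_eq_empty (by omega),
    Finset.product_empty, Finset.sum_empty, Pi.zero_apply]

lemma leibniz_zero_apply (ha : ∀ k, 0 < k → a k = 0) (hb : ∀ k, 0 < k → b k = 0)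
    (z : Phase n) : leibniz a b 0 z = a 0 z * b 0 z := by
  have hsupp : leibnizSupport n 0 = {(0, 0)} := by
    refine Finset.ext fun ⟨α, k⟩ => ?_
    simp only [leibnizSupport, Finset.mem_product, Finset.mem_Iic, Finset.mem_Icc,
      Finset.mem_singleton, Prod.mk.injEq, Int.neg_zero, Int.toNat_zero]
    exact ⟨fun ⟨hα, hk⟩ => ⟨le_antisymm hα fun _ => Nat.zero_le _, le_antisymm hk.2 hk.1⟩,
      fun ⟨hα, hk⟩ => ⟨hα.le, hk.ge, hk.le⟩⟩
  rw [leibniz_eq_sum ha hb, hsupp, Finset.sum_singleton, leibnizTerm_zero_index, sub_zero]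

def restrictAbove (a : ℤ → Phase n → ℂ) (j : ℤ) : ℤ → Phase n → ℂ :=
  fun k => if k ≤ j then 0 else a k

lemma restrictAbove_of_pos (ha : ∀ k, 0 < k → a k = 0) (j : ℤ) :
    ∀ k, 0 < k → restrictAbove a j k = 0 := by
  intro k hk
  by_cases hkj : k ≤ j <;> simp [restrictAbove, hkj, ha k hk]

lemma leibnizTerm_self_eq (ha : ∀ k, 0 < k → a k = 0) {j : ℤ} (hj : j < 0) (z : Phase n)
    (α : Fin n → ℕ) (k : ℤ) :
    leibnizTerm a a j z (α, k) =
      leibnizTerm (restrictAbove a j) (restrictAbove a j) j z (α, k)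
        + (if (α, k) = (0, 0) then a 0 z * a j z else 0)
        + (if (α, k) = (0, j) then a j z * a 0 z else 0) := by
  have hr := restrictAbove_of_pos ha j
  rcases eq_or_ne α 0 with rfl | hα
  · simp only [leibnizTerm_zero_index, restrictAbove, Prod.mk.injEq, true_and]
    rcases lt_trichotomy k j with hkj | rfl | hkj
    · simp [ha (j - k) (by omega), hkj.le, hkj.ne, show k ≠ 0 by omega]
    · simp [hj.ne]
    rcases lt_trichotomy k 0 with hk | rfl | hk
    · simp [not_le.2 hkj, hk.ne, hkj.ne', show ¬j - k ≤ j by omega]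
    · simp [hj.ne', hj.not_ge]
    · simp [ha k hk, hk.ne', show k ≠ j by omega]
  simp only [Prod.mk.injEq, hα, false_and, if_false, add_zero]
  have hsum : 0 < ∑ i, α i :=
    Nat.pos_of_ne_zero fun h => hα (funext fun i => Finset.sum_eq_zero_iff.1 h i (by simp))
  by_cases hk : k ≤ j
  · rw [leibnizTerm_eq_zero_of_right (ha _ (by omega)),
      leibnizTerm_eq_zero_of_right (hr _ (by omega))]
  by_cases hl : j + ((∑ i, α i : ℕ) : ℤ) - k ≤ j
  · rw [leibnizTerm_eq_zero_of_left α (ha k (by omega)),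
      leibnizTerm_eq_zero_of_left α (hr k (by omega))]
  simp only [leibnizTerm, restrictAbove, if_neg hk, if_neg hl]

lemma leibniz_self_of_neg (ha : ∀ k, 0 < k → a k = 0) {j : ℤ} (hj : j < 0) (z : Phase n) :
    leibniz a a j z =
      2 * a 0 z * a j z + leibniz (restrictAbove a j) (restrictAbove a j) j z := by
  have hr := restrictAbove_of_pos ha j
  have hmem : ∀ k, j ≤ k → k ≤ 0 → ((0 : Fin n → ℕ), k) ∈ leibnizSupport n j := fun k h₁ h₂ => by
    simp [leibnizSupport, h₁, h₂]
  rw [leibniz_eq_sum ha ha, leibniz_eq_sum hr hr,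
    Finset.sum_congr rfl fun ak _ => leibnizTerm_self_eq ha hj z ak.1 ak.2,
    Finset.sum_add_distrib, Finset.sum_add_distrib, Finset.sum_ite_eq', Finset.sum_ite_eq',
    if_pos (hmem 0 hj.le le_rfl), if_pos (hmem j le_rfl hj.le)]
  ring

end Leibniz

section SquareRoot

variable {n : ℕ} {U : Set (Phase n)}

theorem eqOn_of_leibniz_self_eqOn (hU : IsOpen U) {a b : ℤ → Phase n → ℂ}
    (ha : ∀ k, 0 < k → a k = 0) (hb : ∀ k, 0 < k → b k = 0) (h₀ : U.EqOn (a 0) (b 0))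
    (hne : ∀ z ∈ U, a 0 z ≠ 0) (hab : ∀ j, U.EqOn (leibniz a a j) (leibniz b b j)) (j : ℤ) :
    U.EqOn (a j) (b j) := by
  have hdown : ∀ j ≤ 0, ∀ k, j ≤ k → U.EqOn (a k) (b k) := by
    intro j hj
    induction j, hj using Int.leInductionDown with
    | base =>
      intro k hk
      rcases hk.eq_or_lt with rfl | hk
      · exact h₀
      · rw [ha k hk, hb k hk]
        exact Set.eqOn_refl _ _
    | pred j hj ih =>
      intro k hk
      rcases hk.eq_or_lt with rfl | hk
      · have hj₁ : j - 1 < 0 := by omega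
        have hrest : ∀ k, U.EqOn (restrictAbove a (j - 1) k) (restrictAbove b (j - 1) k) := by
          intro k
          by_cases hk : k ≤ j - 1
          · simp only [restrictAbove, if_pos hk, Set.eqOn_refl]
          · simpa only [restrictAbove, if_neg hk] using ih k (by omega)
        intro z hz
        have hsq := hab (j - 1) hz
        rw [leibniz_self_of_neg ha hj₁, leibniz_self_of_neg hb hj₁,
          leibniz_congr hU hrest hrest _ hz, ← h₀ hz] at hsq
        exact mul_left_cancel₀ (mul_ne_zero two_ne_zero (hne z hz)) (add_right_cancel hsq)
      · exact ih k (by omega)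
  rcases le_or_gt j 0 with hj | hj
  · exact hdown j hj j le_rfl
  · rw [ha j hj, hb j hj]
    exact Set.eqOn_refl _ _

variable (p : ℤ → Phase n → ℂ) (s : Phase n → ℂ)

/-- The coefficients of degrees `-m, …, 0` of the square root (and `0` in all other degrees).
Degree `-(m+1)` is solved from
`p_{-(m+1)} = 2 s q_{-(m+1)} + (sqrtApprox m ★ sqrtApprox m)_{-(m+1)}`, see `leibniz_self_of_neg` and `restrictAbove_sqrtSymbol`. -/
noncomputable def sqrtApprox : ℕ → ℤ → Phase n → ℂ
  | 0 => Function.update 0 0 s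
  | m + 1 => Function.update (sqrtApprox m) (-(m + 1 : ℤ)) fun z =>
      (p (-(m + 1 : ℤ)) z - leibniz (sqrtApprox m) (sqrtApprox m) (-(m + 1 : ℤ)) z) / (2 * s z)

noncomputable def sqrtSymbol : ℤ → Phase n → ℂ := fun j => sqrtApprox p s (-j).toNat j

lemma sqrtApprox_eq_zero {m : ℕ} {k : ℤ} (hk : 0 < k ∨ k < -(m : ℤ)) : sqrtApprox p s m k = 0 := by
  induction m with
  | zero => simp [sqrtApprox, Function.update_of_ne (show k ≠ 0 by omega)]
  | succ m ih =>
    rw [sqrtApprox, Function.update_of_ne (by omega)]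
    exact ih (by omega)

lemma sqrtApprox_of_le {m m' : ℕ} (hm : m ≤ m') {k : ℤ} (hk : -(m : ℤ) ≤ k) :
    sqrtApprox p s m' k = sqrtApprox p s m k := by
  induction m', hm using Nat.le_induction with
  | base => rfl
  | succ m' _ ih =>
    rw [sqrtApprox, Function.update_of_ne (by omega), ih]

lemma sqrtSymbol_of_pos (j : ℤ) (hj : 0 < j) : sqrtSymbol p s j = 0 :=
  sqrtApprox_eq_zero p s (Or.inl hj)

lemma sqrtSymbol_zero : sqrtSymbol p s 0 = s := by
  simp [sqrtSymbol, sqrtApprox]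

lemma restrictAbove_sqrtSymbol (m : ℕ) :
    restrictAbove (sqrtSymbol p s) (-(m + 1 : ℤ)) = sqrtApprox p s m := by
  funext k
  by_cases hk : k ≤ -(m + 1 : ℤ)
  · rw [restrictAbove, if_pos hk, sqrtApprox_eq_zero p s (m := m) (Or.inr (by omega))]
  rw [restrictAbove, if_neg hk]
  rcases lt_or_ge 0 k with hk₀ | hk₀
  · rw [sqrtSymbol_of_pos p s k hk₀, sqrtApprox_eq_zero p s (Or.inl hk₀)]
  · exact (sqrtApprox_of_le p s (m := (-k).toNat) (m' := m) (by omega) (by omega)).symm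

lemma sqrtSymbol_of_neg (m : ℕ) :
    sqrtSymbol p s (-(m + 1 : ℤ)) = fun z => (p (-(m + 1 : ℤ)) z - leibniz
      (restrictAbove (sqrtSymbol p s) (-(m + 1 : ℤ)))
      (restrictAbove (sqrtSymbol p s) (-(m + 1 : ℤ))) (-(m + 1 : ℤ)) z) / (2 * s z) := by
  rw [restrictAbove_sqrtSymbol, sqrtSymbol, show (-(-(m + 1 : ℤ))).toNat = m + 1 by omega,
    sqrtApprox, Function.update_self]

variable {p s}

lemma differentiableOn_sqrtApprox (hU : IsOpen U) (hp : ∀ j, DifferentiableOn ℂ (p j) U)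
    (hs : DifferentiableOn ℂ s U) (hs₀ : ∀ z ∈ U, s z ≠ 0) (m : ℕ) (k : ℤ) :
    DifferentiableOn ℂ (sqrtApprox p s m k) U := by
  induction m generalizing k with
  | zero =>
    rcases eq_or_ne k 0 with rfl | hk
    · simpa [sqrtApprox] using hs
    · simp [sqrtApprox, Function.update_of_ne hk]
  | succ m ih =>
    rcases eq_or_ne k (-(m + 1 : ℤ)) with rfl | hk
    · have hvan : ∀ k, 0 < k → sqrtApprox p s m k = 0 := fun k hk =>
        sqrtApprox_eq_zero p s (Or.inl hk)
      rw [sqrtApprox, Function.update_self]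
      simp_rw [div_eq_mul_inv]
      exact ((hp _).sub (differentiableOn_leibniz hU hvan hvan ih ih _)).mul
        (((differentiableOn_const 2).mul hs).inv fun z hz => mul_ne_zero two_ne_zero (hs₀ z hz))
    · rw [sqrtApprox, Function.update_of_ne hk]
      exact ih k

lemma leibniz_sqrtSymbol (hp : ∀ j, 0 < j → p j = 0) (hs₀ : ∀ z ∈ U, s z ≠ 0)
    (hsp : ∀ z ∈ U, s z * s z = p 0 z) (j : ℤ) :
    U.EqOn (leibniz (sqrtSymbol p s) (sqrtSymbol p s) j) (p j) := by
  have hq := sqrtSymbol_of_pos p s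
  intro z hz
  rcases lt_trichotomy j 0 with hj | rfl | hj
  · obtain ⟨m, rfl⟩ : ∃ m : ℕ, j = -(m + 1 : ℤ) := ⟨(-j).toNat - 1, by omega⟩
    rw [leibniz_self_of_neg hq hj, sqrtSymbol_of_neg p s m, sqrtSymbol_zero]
    field_simp [hs₀ z hz]
    ring
  · rw [leibniz_zero_apply hq hq, sqrtSymbol_zero, hsp z hz]
  · rw [leibniz_of_pos hq hq hj, hp j hj, Pi.zero_apply]

end SquareRoot

theorem stmt_13_general (n : ℕ) (U : Set (Phase n)) (hU : IsOpen U)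
    (p : ℤ → Phase n → ℂ)
    (hholo : ∀ j : ℤ, DifferentiableOn ℂ (p j) U)
    (hbound : ∀ j : ℤ, 0 < j → p j = 0)
    (s : Phase n → ℂ)
    (hs : DifferentiableOn ℂ s U)
    (hsnz : ∀ z ∈ U, s z ≠ 0)
    (hssq : ∀ z ∈ U, s z * s z = p 0 z) :
    ∃ q : ℤ → Phase n → ℂ,
      ((∀ j : ℤ, DifferentiableOn ℂ (q j) U) ∧
       (∀ j : ℤ, 0 < j → q j = 0) ∧
       (∀ z ∈ U, q 0 z = s z) ∧
       (∀ j : ℤ, ∀ z ∈ U, leibniz q q j z = p j z)) ∧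
      (∀ q' : ℤ → Phase n → ℂ,
        ((∀ j : ℤ, DifferentiableOn ℂ (q' j) U) ∧
         (∀ j : ℤ, 0 < j → q' j = 0) ∧
         (∀ z ∈ U, q' 0 z = s z) ∧
         (∀ j : ℤ, ∀ z ∈ U, leibniz q' q' j z = p j z)) →
        ∀ j : ℤ, ∀ z ∈ U, q' j z = q j z) := by
  have hq₀ : sqrtSymbol p s 0 = s := sqrtSymbol_zero p s
  have hqp := leibniz_sqrtSymbol hbound hsnz hssq
  refine ⟨sqrtSymbol p s, ⟨fun j => differentiableOn_sqrtApprox hU hholo hs hsnz _ j,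
    sqrtSymbol_of_pos p s, fun z _ => by rw [hq₀], hqp⟩, ?_⟩
  rintro q' ⟨-, hq', hq'₀, hq'p⟩ j z hz
  exact eqOn_of_leibniz_self_eqOn hU hq' (sqrtSymbol_of_pos p s)
    (fun z hz => by rw [hq'₀ z hz, hq₀]) (fun z hz => hq'₀ z hz ▸ hsnz z hz)
    (fun j z hz => (hq'p j z hz).trans (hqp j hz).symm) j hz

/-- a formal WKB symbol `p` of order `0` whose principal symbol `p₀`
admits a nowhere vanishing holomorphic square root `s` on `U` has a unique square
root for the Leibniz product with principal symbol `s` (formal-symbol counterpart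
of Lemma 5.3 (ii) of the paper). -/
theorem stmt_13 (n : ℕ) (hn : 1 ≤ n) (U : Set (Phase n)) (hU : IsOpen U)
    (p : ℤ → Phase n → ℂ)
    (hholo : ∀ j : ℤ, DifferentiableOn ℂ (p j) U)
    (hbound : ∀ j : ℤ, 0 < j → p j = 0)
    (s : Phase n → ℂ)
    (hs : DifferentiableOn ℂ s U)
    (hsnz : ∀ z ∈ U, s z ≠ 0)
    (hssq : ∀ z ∈ U, s z * s z = p 0 z) :
    ∃ q : ℤ → Phase n → ℂ,
      ((∀ j : ℤ, DifferentiableOn ℂ (q j) U) ∧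
       (∀ j : ℤ, 0 < j → q j = 0) ∧
       (∀ z ∈ U, q 0 z = s z) ∧
       (∀ j : ℤ, ∀ z ∈ U, leibniz q q j z = p j z)) ∧
      (∀ q' : ℤ → Phase n → ℂ,
        ((∀ j : ℤ, DifferentiableOn ℂ (q' j) U) ∧
         (∀ j : ℤ, 0 < j → q' j = 0) ∧
         (∀ z ∈ U, q' 0 z = s z) ∧
         (∀ j : ℤ, ∀ z ∈ U, leibniz q' q' j z = p j z)) →
        ∀ j : ℤ, ∀ z ∈ U, q' j z = q j z) :=
  stmt_13_general n U hU p hholo hbound s hs hsnz hssq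
end
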